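/- arXiv:1512.02685 — 2 statements merged into one kernel-verified Lean document; each statement's English description precedes it below -/
import Mathlib

section
/- Let q = 2 and n ≥ 1. In the rational function field F_2(t), the identity Σ_{k=0}^{n} (1/D_{n-k})^{2^k} · (1/L_k) = 0 holds. -/
/-!
Multiply the sum by `[n] ≠ 0`. Since `[n] = [k] + [n-k]^{2^k}` in characteristic 2, the `k`-th term
splits into two pieces, and the recursions `D_{m+1} = [m+1] D_m^2`, `L_{k+1} = [k+1] L_k` show that
the second piece of term `k` equals the first piece of term `k+1`. In characteristic 2 these
cancel in pairs, and the two leftover end pieces carry the factor `[0] = 0`.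
-/

/-- `[m] = t^{2^m} - t ∈ F_2[t]`. -/
noncomputable def br (m : ℕ) : Polynomial (ZMod 2) :=
  Polynomial.X ^ (2 ^ m) - Polynomial.X

/-- The Carlitz factorial `D_n`: `D_0 = 1`, `D_n = [n]·D_{n-1}²`. -/
noncomputable def carlitzD : ℕ → Polynomial (ZMod 2)
  | 0 => 1
  | n + 1 => br (n + 1) * (carlitzD n) ^ 2

/-- The Carlitz factorial `L_n`: `L_0 = 1`, `L_n = [n]·L_{n-1}`. -/
noncomputable def carlitzL : ℕ → Polynomial (ZMod 2)
  | 0 => 1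
  | n + 1 => br (n + 1) * carlitzL n

theorem sum_range_add_eq_zero_of_telescope {R : Type*} [Semiring R] [CharP R 2]
    (A B : ℕ → R) (n : ℕ) (hA : A 0 = 0) (hB : B n = 0) (hAB : ∀ j < n, A (j + 1) = B j) :
    ∑ k ∈ Finset.range (n + 1), (A k + B k) = 0 := by
  rw [Finset.sum_add_distrib, Finset.sum_range_succ' A, Finset.sum_range_succ B, hA, hB,
    add_zero, add_zero, Finset.sum_congr rfl fun j hj => hAB j (Finset.mem_range.mp hj)]
  exact CharTwo.add_self_eq_zero _

theorem br_zero : br 0 = 0 := by simp [br]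

theorem br_ne_zero {m : ℕ} (hm : m ≠ 0) : br m ≠ 0 :=
  FiniteField.X_pow_card_pow_sub_X_ne_zero _ hm one_lt_two

theorem br_eq_add_br_pow {k n : ℕ} (h : k ≤ n) : br n = br k + br (n - k) ^ 2 ^ k := by
  rw [br, br, br, sub_pow_char_pow, ← pow_mul, ← pow_add, Nat.sub_add_cancel h]
  ring

theorem carlitzD_ne_zero (m : ℕ) : carlitzD m ≠ 0 := by
  induction m with
  | zero => exact one_ne_zero
  | succ k ih => exact mul_ne_zero (br_ne_zero k.succ_ne_zero) (pow_ne_zero _ ih)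

theorem carlitzL_ne_zero (m : ℕ) : carlitzL m ≠ 0 := by
  induction m with
  | zero => exact one_ne_zero
  | succ k ih => exact mul_ne_zero (br_ne_zero k.succ_ne_zero) ih

local notation "φ" => algebraMap (Polynomial (ZMod 2)) (RatFunc (ZMod 2))

/-- Both sides equal `1 / (D_{n-j-1}^{2^{j+1}} L_j)`. -/
theorem br_mul_inv_carlitz_succ {n j : ℕ} (hj : j < n) :
    φ (br (j + 1)) * ((1 / φ (carlitzD (n - (j + 1)))) ^ 2 ^ (j + 1) * (1 / φ (carlitzL (j + 1)))) =
      φ (br (n - j)) ^ 2 ^ j * ((1 / φ (carlitzD (n - j))) ^ 2 ^ j * (1 / φ (carlitzL j))) := by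
  obtain ⟨m, hm, hmj⟩ : ∃ m, n - j = m + 1 ∧ n - (j + 1) = m := ⟨n - j - 1, by omega, by omega⟩
  have hbrm := RatFunc.algebraMap_ne_zero (br_ne_zero m.succ_ne_zero)
  have hbrj := RatFunc.algebraMap_ne_zero (br_ne_zero j.succ_ne_zero)
  have hD := RatFunc.algebraMap_ne_zero (carlitzD_ne_zero m)
  have hL := RatFunc.algebraMap_ne_zero (carlitzL_ne_zero j)
  rw [hm, hmj, carlitzD, carlitzL, map_mul, map_mul, map_pow, pow_succ, pow_mul]
  simp only [one_div_pow, mul_pow, ← pow_mul]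
  field_simp
  ring

/-- (q = 2, n ≥ 1) In `F_2(t)`, `Σ_{k=0}^{n} (1/D_{n-k})^{2^k} · (1/L_k) = 0`. -/
theorem stmt_6 (n : ℕ) (hn : 1 ≤ n) :
    ∑ k ∈ Finset.range (n + 1),
        (1 / algebraMap (Polynomial (ZMod 2)) (RatFunc (ZMod 2)) (carlitzD (n - k))) ^ (2 ^ k) *
          (1 / algebraMap (Polynomial (ZMod 2)) (RatFunc (ZMod 2)) (carlitzL k)) =
      0 := by
  set a : ℕ → RatFunc (ZMod 2) := fun k => (1 / φ (carlitzD (n - k))) ^ 2 ^ k * (1 / φ (carlitzL k))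
  have hsplit : ∀ k ∈ Finset.range (n + 1),
      φ (br n) * a k = φ (br k) * a k + φ (br (n - k)) ^ 2 ^ k * a k := fun k hk => by
    rw [br_eq_add_br_pow (Finset.mem_range_succ_iff.mp hk), map_add, map_pow, add_mul]
  have hbr_mul_sum : φ (br n) * ∑ k ∈ Finset.range (n + 1), a k = 0 := by
    rw [Finset.mul_sum, Finset.sum_congr rfl hsplit]
    refine sum_range_add_eq_zero_of_telescope _ _ n ?_ ?_ fun j hj => br_mul_inv_carlitz_succ hj
    · rw [br_zero, map_zero, zero_mul]
    · rw [Nat.sub_self, br_zero, map_zero, zero_pow (by positivity), zero_mul]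
  exact (mul_eq_zero.mp hbr_mul_sum).resolve_left
    (RatFunc.algebraMap_ne_zero (br_ne_zero (Nat.one_le_iff_ne_zero.mp hn)))
end

section
/- Let q be a power of a prime p, let d ≥ 1, and let k be a positive multiple of q-1. Then P_d(k) ≠ 0 with valuation at infinity p_d(k) equal to kd if and only if either (I) q is prime, q divides d, and d is squarefree, or (II) q = 2 and d = 4m for some odd squarefree natural number m. -/
/-- `P_d(k) = Σ 1/(1 - ℘^k) ∈ F_q(t)`, the (finite) sum over all monic irreducible
`℘ ∈ F_q[t]` of degree `d`. -/
noncomputable def Pd (Fq : Type*) [Field Fq] (d k : ℕ) : RatFunc Fq :=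
  ∑ᶠ ℘ ∈ {P : Polynomial Fq | P.Monic ∧ Irreducible P ∧ P.natDegree = d},
    (1 - algebraMap (Polynomial Fq) (RatFunc Fq) ℘ ^ k)⁻¹

/-!
Write `N` for the number of monic irreducibles of degree `d` and `q = p ^ a`. The `N` polynomials
`1 - ℘ ^ k` all have degree `kd` and leading coefficient `-1`, so over their common denominator
`P_d(k) = A / ∏ (1 - ℘ ^ k)`, where `A` has degree at most `(N - 1) kd` and coefficient
`N (-1) ^ (N - 1)` in that degree. Hence `P_d(k) ≠ 0` with `v_∞ = kd` iff `p ∤ N`.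

Möbius inversion of `q ^ n = ∑_{e ∣ n} e N_e` gives `d N = ∑_{xy = d} μ(x) q ^ y`. Every nonzero
term has `x ∣ rad d`, and all but `μ(rad d) q ^ (d / rad d) = ± q ^ (d / rad d)` are divisible by
`q ^ (d / rad d + 1)`; so `p ^ (a d / rad d)` exactly divides `d N`, and `p ∤ N` iff
`v_p(d) = a d / rad d`. As `p ^ (v_p(d) - 1)` divides `d / rad d`, this forces `a = 1` and either
`v_p(d) = 1` with `d` squarefree, or `p = 2` and `d / rad d = 2`.
-/

open Finset Polynomial UniqueFactorizationMonoid ArithmeticFunction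
open scoped ArithmeticFunction.Moebius

theorem Nat.pow_sub_one_le_self_iff {p c : ℕ} (hp : 2 ≤ p) (hc : c ≠ 0) :
    p ^ (c - 1) ≤ c ↔ c = 1 ∨ c = 2 ∧ p = 2 := by
  refine ⟨fun h => ?_, by rintro (rfl | ⟨rfl, rfl⟩) <;> simp⟩
  match c, hc, h with
  | 1, _, _ => exact .inl rfl
  | 2, _, h => exact .inr ⟨rfl, le_antisymm (by simpa using h) hp⟩
  | m + 3, _, h =>
    have h2 : 2 ^ (m + 2) ≤ p ^ (m + 2) := Nat.pow_le_pow_left hp _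
    have : m < 2 ^ m := m.lt_two_pow_self
    change p ^ (m + 2) ≤ m + 3 at h
    rw [pow_add] at h2
    omega

theorem Nat.div_radical_mul_radical (n : ℕ) : n / radical n * radical n = n :=
  Nat.div_mul_cancel radical_dvd_self

theorem Nat.radical_eq_self_of_squarefree {n : ℕ} (hn : Squarefree n) : radical n = n :=
  radical_eq_prod_primeFactors.trans (prod_primeFactors_of_squarefree hn)

theorem Nat.factorization_div_radical {p n : ℕ} (hp : p.Prime) (hn : n ≠ 0) (hpn : p ∣ n) :
    (n / radical n).factorization p = n.factorization p - 1 := by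
  have hrad : (radical n).factorization p = 1 :=
    factorization_eq_one_of_squarefree squarefree_radical hp
      ((dvd_radical_iff hp.prime.isRadical hn).2 hpn)
  conv_rhs => rw [← n.div_radical_mul_radical]
  rw [factorization_mul (div_ne_zero_iff_of_dvd radical_dvd_self |>.2 ⟨hn, radical_ne_zero⟩)
    radical_ne_zero, Finsupp.add_apply, hrad, Nat.add_sub_cancel]

theorem Nat.div_radical_eq_one_iff {n : ℕ} (hn : n ≠ 0) :
    n / radical n = 1 ↔ Squarefree n := by
  constructor
  · intro h
    rw [← n.div_radical_mul_radical, h, one_mul]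
    exact squarefree_radical
  · intro h
    rw [radical_eq_self_of_squarefree h, Nat.div_self (pos_of_ne_zero hn)]

theorem Nat.div_radical_eq_two_iff {n : ℕ} (hn : n ≠ 0) :
    n / radical n = 2 ↔ ∃ m : ℕ, Odd m ∧ Squarefree m ∧ n = 4 * m := by
  constructor
  · intro h
    have hn2 : n = 2 * radical n := by rw [← h, n.div_radical_mul_radical]
    obtain ⟨m, hm⟩ := (dvd_radical_iff prime_two.prime.isRadical hn).2 ⟨_, hn2⟩
    have hsq : Squarefree (2 * m) := hm ▸ squarefree_radical
    obtain ⟨hcop, -, hmsq⟩ := squarefree_mul_iff.1 hsq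
    refine ⟨m, coprime_two_left.1 hcop, hmsq, ?_⟩
    rw [hn2, hm]
    ring
  · rintro ⟨m, hm, hmsq, rfl⟩
    have h2m : Squarefree (2 * m) :=
      squarefree_mul_iff.2 ⟨coprime_two_left.2 hm, prime_two.squarefree, hmsq⟩
    have hrad : radical (4 * m) = 2 * m := by
      rw [radical_eq_prod_primeFactors, show 4 * m = 2 * (2 * m) by ring,
        primeFactors_mul two_ne_zero h2m.ne_zero,
        union_eq_right.2 (primeFactors_mono (dvd_mul_right 2 m) h2m.ne_zero),
        prod_primeFactors_of_squarefree h2m]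
    rw [hrad, show 4 * m = 2 * (2 * m) by ring, Nat.mul_div_cancel _ (pos_of_ne_zero h2m.ne_zero)]

theorem Nat.factorization_eq_mul_div_radical_iff {p a d : ℕ} (hp : p.Prime) (ha : a ≠ 0)
    (hd : d ≠ 0) :
    d.factorization p = a * (d / radical d) ↔
      a = 1 ∧ (p ∣ d ∧ d / radical d = 1 ∨ p = 2 ∧ d / radical d = 2) := by
  set e := d / radical d
  constructor
  · intro h
    set c := d.factorization p
    have he0 : e ≠ 0 := left_ne_zero_of_mul (d.div_radical_mul_radical ▸ hd)
    have hc0 : c ≠ 0 := h ▸ mul_ne_zero ha he0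
    have hpd : p ∣ d := dvd_of_factorization_pos hc0
    -- `p ^ (c - 1) ∣ e ≤ a * e = c`, which only small `c` allow
    have hpe : p ^ (c - 1) ≤ e := by
      refine le_of_dvd (pos_of_ne_zero he0) ?_
      rw [← factorization_div_radical hp hd hpd]
      exact ordProj_dvd e p
    have hce : e ≤ c := h ▸ Nat.le_mul_of_pos_left e (pos_of_ne_zero ha)
    obtain hc | ⟨hc, rfl⟩ := (pow_sub_one_le_self_iff hp.two_le hc0).1 (hpe.trans hce)
    · obtain ⟨rfl, he1⟩ := mul_eq_one.1 (hc ▸ h).symm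
      exact ⟨rfl, .inl ⟨hpd, he1⟩⟩
    · have he2 : e = 2 := le_antisymm (hc ▸ hce) (by simpa [hc] using hpe)
      obtain rfl : a = 1 := by
        rw [hc, he2] at h
        omega
      exact ⟨rfl, .inr ⟨rfl, he2⟩⟩
  · rintro ⟨rfl, ⟨hpd, he⟩ | ⟨rfl, he⟩⟩
    · rw [he, factorization_eq_one_of_squarefree ((div_radical_eq_one_iff hd).1 he) hp hpd]
    · have h2d : 2 ∣ d := ⟨radical d, by rw [← he, d.div_radical_mul_radical]⟩
      have := factorization_div_radical prime_two hd h2d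
      rw [show d / radical d = 2 from he, prime_two.factorization_self] at this
      omega

theorem Nat.pow_dvd_and_not_pow_succ_dvd_of_pow_succ_dvd_sub {p m v : ℕ} (hp : p.Prime) {u : ℤ}
    (hu : ¬(p : ℤ) ∣ u) (h : (p : ℤ) ^ (v + 1) ∣ m - u * p ^ v) :
    p ^ v ∣ m ∧ ¬p ^ (v + 1) ∣ m := by
  have hpv : (p : ℤ) ^ v ∣ m := by
    simpa using dvd_add ((pow_dvd_pow _ v.le_succ).trans h) (dvd_mul_left _ u)
  refine ⟨mod_cast hpv, fun hm => hu ?_⟩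
  have hm' : (p : ℤ) ^ (v + 1) ∣ m := by exact_mod_cast hm
  have : (p : ℤ) ^ v * p ∣ (p : ℤ) ^ v * u := by
    simpa [pow_succ, mul_comm u] using hm'.sub h
  exact (mul_dvd_mul_iff_left (pow_ne_zero _ (mod_cast hp.ne_zero))).1 this

theorem Nat.not_dvd_iff_factorization_eq {p d N v : ℕ} (hp : p.Prime) (hd : d ≠ 0)
    (h : p ^ v ∣ d * N) (h' : ¬p ^ (v + 1) ∣ d * N) :
    ¬p ∣ N ↔ d.factorization p = v := by
  have hdN : d * N ≠ 0 := fun h0 => h' (h0 ▸ dvd_zero _)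
  have hN : N ≠ 0 := right_ne_zero_of_mul hdN
  have hv : (d * N).factorization p = v :=
    le_antisymm (not_lt.1 fun hlt => h' ((hp.pow_dvd_iff_le_factorization hdN).2 hlt))
      ((hp.pow_dvd_iff_le_factorization hdN).1 h)
  rw [factorization_mul hd hN, Finsupp.add_apply] at hv
  rw [hp.dvd_iff_one_le_factorization hN]
  omega

theorem pow_succ_dvd_sum_moebius_mul_pow_sub (q : ℤ) {n : ℕ} (hn : n ≠ 0) :
    q ^ (n / radical n + 1) ∣
      ∑ x ∈ n.divisorsAntidiagonal, μ x.1 * q ^ x.2 -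
        μ (radical n) * q ^ (n / radical n) := by
  have hmem : (radical n, n / radical n) ∈ n.divisorsAntidiagonal :=
    Nat.mem_divisorsAntidiagonal.2 ⟨by rw [mul_comm, n.div_radical_mul_radical], hn⟩
  rw [← add_sum_erase _ _ hmem, add_sub_cancel_left]
  refine dvd_sum fun x hx => ?_
  obtain ⟨hne, hx⟩ := mem_erase.1 hx
  obtain ⟨hxn, -⟩ := Nat.mem_divisorsAntidiagonal.1 hx
  by_cases hμ : μ x.1 = 0
  · simp [hμ]
  refine dvd_mul_of_dvd_right (pow_dvd_pow q ?_) _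
  -- `x.1` is squarefree, so it divides `radical n`, and `x.2 = (n / radical n) * w` with `w ≥ 2`
  obtain ⟨w, hw⟩ : x.1 ∣ radical n :=
    (dvd_radical_iff (moebius_ne_zero_iff_squarefree.1 hμ).isRadical hn).2 ⟨x.2, hxn.symm⟩
  set e := n / radical n
  have he : e * radical n = n := n.div_radical_mul_radical
  have hx2 : x.2 = e * w := by
    refine Nat.eq_of_mul_eq_mul_left (Nat.pos_of_ne_zero (left_ne_zero_of_mul (hxn ▸ hn))) ?_
    rw [hxn, ← he, hw]
    ring
  have hw1 : w ≠ 1 := by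
    rintro rfl
    exact hne (Prod.ext (by simp [hw]) (by simp [hx2]))
  have hw0 : w ≠ 0 := by
    rintro rfl
    exact radical_ne_zero (hw.trans (mul_zero _))
  have he0 : e ≠ 0 := left_ne_zero_of_mul (he ▸ hn)
  rw [hx2]
  nlinarith [Nat.two_le_iff w |>.2 ⟨hw0, hw1⟩, Nat.pos_of_ne_zero he0]

section

variable {R : Type*} [CommRing R] [IsDomain R] {ι : Type*} {s : Finset ι} {u : ι → R[X]}
  {D : ℕ} {c : R}

theorem Polynomial.natDegree_prod_eq_and_leadingCoeff_prod_eq (hc : c ≠ 0)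
    (hu : ∀ i ∈ s, (u i).natDegree = D ∧ (u i).leadingCoeff = c) :
    (∏ i ∈ s, u i).natDegree = #s * D ∧ (∏ i ∈ s, u i).leadingCoeff = c ^ #s := by
  have hu0 : ∀ i ∈ s, u i ≠ 0 := fun i hi => leadingCoeff_ne_zero.1 ((hu i hi).2 ▸ hc)
  rw [natDegree_prod _ _ hu0, sum_congr rfl fun i hi => (hu i hi).1, sum_const, smul_eq_mul,
    leadingCoeff_prod, prod_congr rfl fun i hi => (hu i hi).2, prod_const]
  exact ⟨rfl, rfl⟩

theorem Polynomial.natDegree_sum_prod_erase_le_and_coeff_eq [DecidableEq ι] (hc : c ≠ 0)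
    (hu : ∀ i ∈ s, (u i).natDegree = D ∧ (u i).leadingCoeff = c) :
    (∑ i ∈ s, ∏ j ∈ s.erase i, u j).natDegree ≤ (#s - 1) * D ∧
      (∑ i ∈ s, ∏ j ∈ s.erase i, u j).coeff ((#s - 1) * D) = #s * c ^ (#s - 1) := by
  have hterm (i : ι) := natDegree_prod_eq_and_leadingCoeff_prod_eq (s := s.erase i) hc
    fun j hj => hu j (mem_of_mem_erase hj)
  refine ⟨natDegree_sum_le_of_forall_le _ _ fun i hi => ?_, ?_⟩
  · rw [(hterm i).1, card_erase_of_mem hi]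
  · rw [finsetSum_coeff, sum_congr rfl fun i hi => ?_, sum_const, nsmul_eq_mul]
    rw [← card_erase_of_mem hi, ← (hterm i).1, coeff_natDegree, (hterm i).2]

end

theorem Polynomial.Monic.natDegree_one_sub_pow_and_leadingCoeff {R : Type*} [CommRing R]
    [Nontrivial R] {P : R[X]} (hP : P.Monic) {k : ℕ} (hk : k * P.natDegree ≠ 0) :
    (1 - P ^ k).natDegree = k * P.natDegree ∧ (1 - P ^ k).leadingCoeff = -1 := by
  have hmon : (P ^ k - C 1).Monic :=
    (hP.pow k).sub_of_left (by
      rw [degree_C one_ne_zero, ← natDegree_pos_iff_degree_pos, hP.natDegree_pow]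
      exact Nat.pos_of_ne_zero hk)
  rw [show 1 - P ^ k = -(P ^ k - C 1) by rw [C_1]; ring, natDegree_neg, leadingCoeff_neg,
    hmon.leadingCoeff, natDegree_sub_C, hP.natDegree_pow]
  exact ⟨rfl, rfl⟩

namespace RatFunc

variable {K : Type*} [Field K] {ι : Type*} {s : Finset ι} {u : ι → K[X]}

theorem sum_inv_algebraMap_eq_div [DecidableEq ι] (hu : ∀ i ∈ s, u i ≠ 0) :
    ∑ i ∈ s, (algebraMap K[X] (RatFunc K) (u i))⁻¹ =
      algebraMap K[X] (RatFunc K) (∑ i ∈ s, ∏ j ∈ s.erase i, u j) /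
        algebraMap K[X] (RatFunc K) (∏ i ∈ s, u i) := by
  have hu' : ∀ i ∈ s, algebraMap K[X] (RatFunc K) (u i) ≠ 0 :=
    fun i hi => algebraMap_ne_zero (hu i hi)
  rw [eq_div_iff (by simpa only [map_prod] using prod_ne_zero_iff.2 hu'), sum_mul, map_sum]
  refine sum_congr rfl fun i hi => ?_
  rw [map_prod, map_prod, ← mul_prod_erase _ _ hi, inv_mul_cancel_left₀ (hu' i hi)]

theorem sum_inv_algebraMap_ne_zero_and_intDegree_eq_iff {D : ℕ} {c : K} (hc : c ≠ 0)
    (hu : ∀ i ∈ s, (u i).natDegree = D ∧ (u i).leadingCoeff = c) :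
    (∑ i ∈ s, (algebraMap K[X] (RatFunc K) (u i))⁻¹ ≠ 0 ∧
        (∑ i ∈ s, (algebraMap K[X] (RatFunc K) (u i))⁻¹).intDegree = -D) ↔
      (#s : K) ≠ 0 := by
  classical
  have hu0 : ∀ i ∈ s, u i ≠ 0 := fun i hi => leadingCoeff_ne_zero.1 ((hu i hi).2 ▸ hc)
  rw [sum_inv_algebraMap_eq_div hu0]
  obtain ⟨hBdeg, -⟩ := natDegree_prod_eq_and_leadingCoeff_prod_eq hc hu
  obtain ⟨hAdeg, hAcoeff⟩ := natDegree_sum_prod_erase_le_and_coeff_eq hc hu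
  set A := ∑ i ∈ s, ∏ j ∈ s.erase i, u j
  set B := ∏ i ∈ s, u i
  have hB : algebraMap K[X] (RatFunc K) B ≠ 0 := algebraMap_ne_zero (prod_ne_zero_iff.2 hu0)
  have hcard : (#s : K) ≠ 0 ↔ A.coeff ((#s - 1) * D) ≠ 0 := by
    simp [hAcoeff, hc]
  rw [hcard]
  rcases eq_or_ne A 0 with hA | hA
  · simp [hA]
  have hs : 1 ≤ #s := card_pos.2 (nonempty_of_sum_ne_zero hA)
  rw [intDegree_div (algebraMap_ne_zero hA) hB, intDegree_polynomial, intDegree_polynomial, hBdeg]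
  have hcoeff : A.coeff ((#s - 1) * D) ≠ 0 ↔ A.natDegree = (#s - 1) * D :=
    ⟨fun h => hAdeg.antisymm (le_natDegree_of_ne_zero h),
      fun h => h ▸ leadingCoeff_ne_zero.2 hA⟩
  rw [hcoeff, Nat.sub_one_mul]
  have : D ≤ #s * D := Nat.le_mul_of_pos_left D hs
  rw [and_iff_right (div_ne_zero (algebraMap_ne_zero hA) hB)]
  omega

end RatFunc

namespace Polynomial

variable (K : Type*) [Field K] [Fintype K]

theorem setOf_monic_irreducible_natDegree_eq_finite (d : ℕ) :
    {P : K[X] | P.Monic ∧ Irreducible P ∧ P.natDegree = d}.Finite := by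
  have : Finite (degreeLT K (d + 1)) := .of_equiv _ (degreeLTEquiv K (d + 1)).toEquiv.symm
  refine (Set.toFinite (degreeLT K (d + 1) : Set K[X])).subset fun P hP => ?_
  rw [SetLike.mem_coe, mem_degreeLT]
  exact degree_le_natDegree.trans_lt (by rw [hP.2.2]; exact_mod_cast d.lt_succ_self)

noncomputable def monicIrreducibles (d : ℕ) : Finset K[X] :=
  (setOf_monic_irreducible_natDegree_eq_finite K d).toFinset

variable {K} in
@[simp]
theorem mem_monicIrreducibles {d : ℕ} {P : K[X]} :
    P ∈ monicIrreducibles K d ↔ P.Monic ∧ Irreducible P ∧ P.natDegree = d := by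
  simp [monicIrreducibles]

theorem card_pow_eq_sum_divisors_mul_card_monicIrreducibles {n : ℕ} (hn : n ≠ 0) :
    Fintype.card K ^ n = ∑ e ∈ n.divisors, e * #(monicIrreducibles K e) := by
  classical
  set q := Fintype.card K
  set g : K[X] := X ^ q ^ n - X
  have hg0 : g ≠ 0 := FiniteField.X_pow_card_pow_sub_X_ne_zero K hn Fintype.one_lt_card
  have hsq : Squarefree g := by
    refine (galois_poly_separable (ringChar K) (q ^ n) ?_).squarefree
    exact (ringChar.spec K _).1 (by simp [q, hn])
  have hfactors : (normalizedFactors g).toFinset = n.divisors.biUnion (monicIrreducibles K) := by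
    ext P
    rw [Multiset.mem_toFinset, Polynomial.mem_normalizedFactors_iff hg0]
    simp only [mem_biUnion, mem_monicIrreducibles, Nat.mem_divisors]
    constructor
    · rintro ⟨hirr, hmon, hdvd⟩
      refine ⟨P.natDegree, ⟨?_, hn⟩, hmon, hirr, rfl⟩
      rwa [hirr.natDegree_dvd_iff_dvd_X_pow_card_pow_sub_X, Nat.card_eq_fintype_card]
    · rintro ⟨e, ⟨he, -⟩, hmon, hirr, rfl⟩
      refine ⟨hirr, hmon, ?_⟩
      rwa [hirr.natDegree_dvd_iff_dvd_X_pow_card_pow_sub_X, Nat.card_eq_fintype_card] at he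
  have hdisj : (n.divisors : Set ℕ).PairwiseDisjoint (monicIrreducibles K) :=
    fun e _ e' _ hne => disjoint_left.2 fun P hP hP' =>
      hne ((mem_monicIrreducibles.1 hP).2.2.symm.trans (mem_monicIrreducibles.1 hP').2.2)
  calc q ^ n = g.natDegree :=
        (FiniteField.X_pow_card_pow_sub_X_natDegree_eq K hn Fintype.one_lt_card).symm
    _ = ((normalizedFactors g).map natDegree).sum := by
        conv_lhs => rw [← leadingCoeff_mul_prod_normalizedFactors g]
        rw [natDegree_C_mul (by simpa using hg0),
          natDegree_multiset_prod _ (zero_notMem_normalizedFactors g)]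
    _ = ∑ P ∈ (normalizedFactors g).toFinset, P.natDegree := by
        rw [Finset.sum_eq_multiset_sum, Multiset.toFinset_val,
          ((squarefree_iff_nodup_normalizedFactors hg0).1 hsq).dedup]
    _ = ∑ e ∈ n.divisors, e * #(monicIrreducibles K e) := by
        rw [hfactors, sum_biUnion hdisj]
        refine sum_congr rfl fun e _ => ?_
        rw [sum_congr rfl fun P hP => (mem_monicIrreducibles.1 hP).2.2, sum_const, smul_eq_mul,
          mul_comm]

theorem mul_card_monicIrreducibles_eq_sum_moebius {n : ℕ} (hn : n ≠ 0) :
    ((n * #(monicIrreducibles K n) : ℕ) : ℤ) =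
      ∑ x ∈ n.divisorsAntidiagonal, μ x.1 * (Fintype.card K : ℤ) ^ x.2 := by
  have gauss : ∀ m > 0, ∑ e ∈ m.divisors, ((e * #(monicIrreducibles K e) : ℕ) : ℤ) =
      (Fintype.card K : ℤ) ^ m := fun m hm => by
    exact_mod_cast (card_pow_eq_sum_divisors_mul_card_monicIrreducibles K hm.ne').symm
  simpa using ((sum_eq_iff_sum_smul_moebius_eq.1 gauss) n (Nat.pos_of_ne_zero hn)).symm

theorem pow_dvd_and_not_pow_succ_dvd_mul_card_monicIrreducibles {p a n : ℕ} (hp : p.Prime)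
    (hq : Fintype.card K = p ^ a) (ha : a ≠ 0) (hn : n ≠ 0) :
    p ^ (a * (n / radical n)) ∣ n * #(monicIrreducibles K n) ∧
      ¬p ^ (a * (n / radical n) + 1) ∣ n * #(monicIrreducibles K n) := by
  have hμ : IsUnit (μ (radical n)) := Int.isUnit_iff.2 <|
    moebius_ne_zero_iff_eq_or.1 (moebius_ne_zero_iff_squarefree.2 squarefree_radical)
  refine Nat.pow_dvd_and_not_pow_succ_dvd_of_pow_succ_dvd_sub hp
    (fun h => (Nat.prime_iff_prime_int.1 hp).not_isUnit (isUnit_of_dvd_unit h hμ)) ?_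
  have hq' : (p : ℤ) ^ a = Fintype.card K := by rw [hq, Nat.cast_pow]
  have h := pow_succ_dvd_sum_moebius_mul_pow_sub ((p : ℤ) ^ a) hn
  rw [hq', ← mul_card_monicIrreducibles_eq_sum_moebius K hn, ← hq', ← pow_mul, ← pow_mul]
    at h
  exact (pow_dvd_pow _ (by nlinarith [Nat.pos_of_ne_zero ha])).trans h

end Polynomial

theorem Pd_eq_sum (K : Type*) [Field K] [Fintype K] (d k : ℕ) :
    Pd K d k = ∑ P ∈ monicIrreducibles K d, (algebraMap K[X] (RatFunc K) (1 - P ^ k))⁻¹ := by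
  rw [Pd, ← (setOf_monic_irreducible_natDegree_eq_finite K d).coe_toFinset,
    finsum_mem_coe_finset]
  simp [monicIrreducibles]

theorem stmt_10_general (Fq : Type*) [Field Fq] [Fintype Fq] (d k : ℕ) (hd : 1 ≤ d) (hk : 0 < k) :
    (Pd Fq d k ≠ 0 ∧ -(Pd Fq d k).intDegree = ((k * d : ℕ) : ℤ)) ↔
      ((Nat.Prime (Fintype.card Fq) ∧ Fintype.card Fq ∣ d ∧ Squarefree d) ∨
        (Fintype.card Fq = 2 ∧ ∃ m : ℕ, Odd m ∧ Squarefree m ∧ d = 4 * m)) := by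
  obtain ⟨p, _⟩ := CharP.exists Fq
  obtain ⟨a, hp, hq⟩ := FiniteField.card Fq p
  have hd0 : d ≠ 0 := by omega
  have hdeg : ∀ P ∈ monicIrreducibles Fq d,
      (1 - P ^ k).natDegree = k * d ∧ (1 - P ^ k).leadingCoeff = -1 := fun P hP => by
    obtain ⟨hmon, -, rfl⟩ := mem_monicIrreducibles.1 hP
    exact hmon.natDegree_one_sub_pow_and_leadingCoeff (by positivity)
  obtain ⟨hdvd, hndvd⟩ :=
    pow_dvd_and_not_pow_succ_dvd_mul_card_monicIrreducibles Fq hp hq a.ne_zero hd0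
  rw [neg_eq_iff_eq_neg, Pd_eq_sum,
    RatFunc.sum_inv_algebraMap_ne_zero_and_intDegree_eq_iff (neg_ne_zero.2 one_ne_zero) hdeg,
    Ne, CharP.cast_eq_zero_iff Fq p, Nat.not_dvd_iff_factorization_eq hp hd0 hdvd hndvd, hq,
    Nat.factorization_eq_mul_div_radical_iff hp a.ne_zero hd0, Nat.div_radical_eq_one_iff hd0,
    Nat.div_radical_eq_two_iff hd0]
  rcases eq_or_ne (a : ℕ) 1 with ha | ha
  · simp [ha, hp]
  · simp [ha, mt Nat.Prime.eq_one_of_pow ha, Nat.prime_two.pow_eq_iff]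

/-- For `d ≥ 1` and `k` a positive multiple of `q - 1`: `P_d(k) ≠ 0` with valuation at
infinity exactly `kd` iff (I) `q` is prime, `q ∣ d` and `d` is squarefree, or (II) `q = 2`
and `d = 4m` with `m` odd and squarefree. -/
theorem stmt_10 (Fq : Type*) [Field Fq] [Fintype Fq] (d k : ℕ) (hd : 1 ≤ d) (hk : 0 < k)
    (hdvd : Fintype.card Fq - 1 ∣ k) :
    (Pd Fq d k ≠ 0 ∧ -(Pd Fq d k).intDegree = ((k * d : ℕ) : ℤ)) ↔
      ((Nat.Prime (Fintype.card Fq) ∧ Fintype.card Fq ∣ d ∧ Squarefree d) ∨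
        (Fintype.card Fq = 2 ∧ ∃ m : ℕ, Odd m ∧ Squarefree m ∧ d = 4 * m)) :=
  stmt_10_general Fq d k hd hk
end
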